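/- arXiv:1107.2636 — 5 statements merged into one kernel-verified Lean document; each statement's English description precedes it below -/
import Mathlib

section
/- For n ≥ 1, every tiling of [0,1]^2 by dyadic tiles of order n either is the union of a tiling of the horizontal rectangle [0,1] × [0,1/2] and a tiling of [0,1] × [1/2,1], or is the union of a tiling of the vertical rectangle [0,1/2] × [0,1] and a tiling of [1/2,1] × [0,1]. -/
/-! A dyadic tile with `j ≥ 1` lies in the lower or in the upper half of the square,
and one with `i ≥ 1` in the left or in the right half. A full-height column (`j = 0`) and a
full-width row (`i = 0`) always have overlapping interiors, so a tiling cannot contain both: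
either all its tiles have `j ≥ 1` or all have `i ≥ 1`. In the first case the tiles lying in the
lower half are finitely many closed sets covering the part of the square strictly below the
midline, hence also its closure, the whole lower half; likewise for the upper half, and for the
left and right halves in the second case. -/

open Set Filter Topology

noncomputable section

/-- The dyadic tile `[a/2^i, (a+1)/2^i] × [b/2^j, (b+1)/2^j]` as a subset of `ℝ × ℝ`. -/
def dyadicTile (i j a b : ℕ) : Set (ℝ × ℝ) :=
  Set.Icc ((a : ℝ) / 2 ^ i) (((a : ℝ) + 1) / 2 ^ i) ×ˢ
    Set.Icc ((b : ℝ) / 2 ^ j) (((b : ℝ) + 1) / 2 ^ j)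

/-- `t` is a dyadic tile of order `n` contained in the unit square. -/
def IsDyadicTile (n : ℕ) (t : Set (ℝ × ℝ)) : Prop :=
  ∃ i j a b : ℕ, i + j = n ∧ a < 2 ^ i ∧ b < 2 ^ j ∧ t = dyadicTile i j a b

/-- `F` is a tiling of the region `R` by dyadic tiles of order `n`:
a set of order-`n` tiles whose union is `R` and whose interiors are pairwise disjoint. -/
def IsTiling (n : ℕ) (F : Set (Set (ℝ × ℝ))) (R : Set (ℝ × ℝ)) : Prop :=
  (∀ t ∈ F, IsDyadicTile n t) ∧ ⋃₀ F = R ∧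
    F.Pairwise fun s t => interior s ∩ interior t = ∅

def unitSquare : Set (ℝ × ℝ) := Set.Icc (0 : ℝ) 1 ×ˢ Set.Icc (0 : ℝ) 1

def dyadicInterval (k a : ℕ) : Set ℝ := Icc (a / 2 ^ k) ((a + 1) / 2 ^ k)

lemma dyadicTile_eq_prod (i j a b : ℕ) :
    dyadicTile i j a b = dyadicInterval i a ×ˢ dyadicInterval j b := rfl

namespace dyadicInterval

variable {k a : ℕ}

lemma zero_zero : dyadicInterval 0 0 = Icc 0 1 := by
  simp [dyadicInterval]

lemma isClosed : IsClosed (dyadicInterval k a) := isClosed_Icc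

lemma interior_nonempty : (interior (dyadicInterval k a)).Nonempty := by
  rw [dyadicInterval, interior_Icc, nonempty_Ioo]
  gcongr
  exact lt_add_one _

lemma nonempty : (dyadicInterval k a).Nonempty :=
  interior_nonempty.mono interior_subset

lemma subset_Icc_div {c d : ℕ} (hc : c ≤ a) (hd : a + 1 ≤ d) :
    dyadicInterval k a ⊆ Icc (c / 2 ^ k) (d / 2 ^ k) :=
  Icc_subset_Icc (by gcongr) (by gcongr; exact_mod_cast hd)

lemma subset_unitInterval (ha : a < 2 ^ k) : dyadicInterval k a ⊆ Icc 0 1 := by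
  simpa using subset_Icc_div (k := k) (Nat.zero_le a) ha

lemma subset_lower_or_upper (hk : 1 ≤ k) (ha : a < 2 ^ k) :
    dyadicInterval k a ⊆ Icc 0 (1 / 2) ∨ dyadicInterval k a ⊆ Icc (1 / 2) 1 := by
  obtain ⟨k, rfl⟩ := Nat.exists_eq_add_of_le' hk
  have half : (2 : ℝ) ^ k / 2 ^ (k + 1) = 2⁻¹ := by
    rw [pow_succ]; field_simp
  rcases lt_or_ge a (2 ^ k) with h | h
  · left
    simpa [half] using subset_Icc_div (k := k + 1) (Nat.zero_le a) h
  · right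
    simpa [half] using subset_Icc_div (k := k + 1) h ha

lemma ne_unitInterval (hk : 1 ≤ k) : dyadicInterval k a ≠ Icc 0 1 := by
  intro h
  rw [dyadicInterval, Icc_eq_Icc_iff (by gcongr; linarith)] at h
  have h2k : (2 : ℝ) ^ k ≠ 1 := (one_lt_pow₀ one_lt_two (by omega)).ne'
  obtain ⟨ha, ha1⟩ := h
  have ha0 : (a : ℝ) = 0 := by simpa using ha
  rw [ha0, zero_add, div_eq_one_iff_eq (by positivity)] at ha1
  exact h2k ha1.symm

end dyadicInterval

lemma closure_unitInterval_sdiff_upper :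
    closure (Icc (0 : ℝ) 1 \ Icc (1 / 2) 1) = Icc 0 (1 / 2) := by
  have : Icc (0 : ℝ) 1 \ Icc (1 / 2) 1 = Ico 0 (1 / 2) := by
    ext x
    simp only [Set.mem_sdiff, mem_Icc, mem_Ico]
    grind
  rw [this, closure_Ico (by norm_num)]

lemma closure_unitInterval_sdiff_lower :
    closure (Icc (0 : ℝ) 1 \ Icc 0 (1 / 2)) = Icc (1 / 2) 1 := by
  have : Icc (0 : ℝ) 1 \ Icc 0 (1 / 2) = Ioc (1 / 2) 1 := by
    ext x
    simp only [Set.mem_sdiff, mem_Icc, mem_Ioc]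
    grind
  rw [this, closure_Ioc (by norm_num)]

lemma isClosed_dyadicTile (i j a b : ℕ) : IsClosed (dyadicTile i j a b) :=
  dyadicInterval.isClosed.prod dyadicInterval.isClosed

lemma interior_dyadicTile_nonempty (i j a b : ℕ) : (interior (dyadicTile i j a b)).Nonempty := by
  rw [dyadicTile_eq_prod, interior_prod_eq]
  exact dyadicInterval.interior_nonempty.prod dyadicInterval.interior_nonempty

lemma dyadicTile_subset_lower_or_upper {i j a b : ℕ} (hj : 1 ≤ j)
    (ha : a < 2 ^ i) (hb : b < 2 ^ j) :
    dyadicTile i j a b ⊆ Icc 0 1 ×ˢ Icc 0 (1 / 2) ∨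
      dyadicTile i j a b ⊆ Icc 0 1 ×ˢ Icc (1 / 2) 1 :=
  (dyadicInterval.subset_lower_or_upper hj hb).imp
    (prod_mono (dyadicInterval.subset_unitInterval ha))
    (prod_mono (dyadicInterval.subset_unitInterval ha))

lemma dyadicTile_subset_left_or_right {i j a b : ℕ} (hi : 1 ≤ i)
    (ha : a < 2 ^ i) (hb : b < 2 ^ j) :
    dyadicTile i j a b ⊆ Icc 0 (1 / 2) ×ˢ Icc 0 1 ∨
      dyadicTile i j a b ⊆ Icc (1 / 2) 1 ×ˢ Icc 0 1 :=
  (dyadicInterval.subset_lower_or_upper hi ha).imp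
    (prod_mono · (dyadicInterval.subset_unitInterval hb))
    (prod_mono · (dyadicInterval.subset_unitInterval hb))

lemma setOf_isDyadicTile_finite (n : ℕ) : {t | IsDyadicTile n t}.Finite := by
  refine ((finite_Iic n).prod <| (finite_Iic n).prod <|
    (finite_Iio (2 ^ n)).prod (finite_Iio (2 ^ n))).image
      (fun p ↦ dyadicTile p.1 p.2.1 p.2.2.1 p.2.2.2) |>.subset ?_
  rintro _ ⟨i, j, a, b, hij, ha, hb, rfl⟩
  refine ⟨(i, j, a, b), ⟨?_, ?_, ?_, ?_⟩, rfl⟩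
  · show i ≤ n; omega
  · show j ≤ n; omega
  · exact ha.trans_le (Nat.pow_le_pow_right two_pos (by omega))
  · exact hb.trans_le (Nat.pow_le_pow_right two_pos (by omega))

lemma closure_sUnion_sdiff_subset {X : Type*} [TopologicalSpace X] {F : Set (Set X)} {A B : Set X}
    (hF : F.Finite) (hclosed : ∀ t ∈ F, IsClosed t) (hAB : ∀ t ∈ F, t ⊆ A ∨ t ⊆ B) :
    closure (⋃₀ F \ B) ⊆ ⋃₀ {t ∈ F | t ⊆ A} := by
  refine closure_minimal ?_ ?_
  · rintro x ⟨⟨t, ht, hxt⟩, hxB⟩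
    exact ⟨t, ⟨ht, (hAB t ht).resolve_right fun htB ↦ hxB (htB hxt)⟩, hxt⟩
  · rw [sUnion_eq_biUnion]
    exact (hF.subset (sep_subset _ _)).isClosed_biUnion fun t ht ↦ hclosed t ht.1

namespace IsTiling

variable {n : ℕ} {F : Set (Set (ℝ × ℝ))} {R : Set (ℝ × ℝ)}

lemma finite (hF : IsTiling n F R) : F.Finite :=
  (setOf_isDyadicTile_finite n).subset hF.1

lemma isClosed (hF : IsTiling n F R) {t : Set (ℝ × ℝ)} (ht : t ∈ F) : IsClosed t := by
  obtain ⟨i, j, a, b, -, -, -, rfl⟩ := hF.1 t ht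
  exact isClosed_dyadicTile i j a b

lemma of_subset_sUnion_sep {A : Set (ℝ × ℝ)} (hF : IsTiling n F R) (hA : A ⊆ ⋃₀ {t ∈ F | t ⊆ A}) :
    IsTiling n {t ∈ F | t ⊆ A} A :=
  ⟨fun t ht ↦ hF.1 t ht.1, (sUnion_subset fun _ ht ↦ ht.2).antisymm hA,
    hF.2.2.mono (Set.sep_subset _ _)⟩

lemma split {A B : Set (ℝ × ℝ)} (hF : IsTiling n F R) (hAB : ∀ t ∈ F, t ⊆ A ∨ t ⊆ B)
    (hA : closure (R \ B) = A) (hB : closure (R \ A) = B) :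
    ∃ F₁ F₂ : Set (Set (ℝ × ℝ)), F = F₁ ∪ F₂ ∧ IsTiling n F₁ A ∧ IsTiling n F₂ B := by
  refine ⟨{t ∈ F | t ⊆ A}, {t ∈ F | t ⊆ B}, ?_,
    hF.of_subset_sUnion_sep ?_, hF.of_subset_sUnion_sep ?_⟩
  · ext t
    exact ⟨fun ht ↦ (hAB t ht).imp (⟨ht, ·⟩) (⟨ht, ·⟩), fun ht ↦ ht.elim (·.1) (·.1)⟩
  · have hcl := closure_sUnion_sdiff_subset hF.finite (fun _ ↦ hF.isClosed) hAB
    rwa [hF.2.1, hA] at hcl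
  · have hcl := closure_sUnion_sdiff_subset hF.finite (fun _ ↦ hF.isClosed)
      fun t ht ↦ (hAB t ht).symm
    rwa [hF.2.1, hB] at hcl

lemma split_horizontal (hF : IsTiling n F unitSquare)
    (h : ∀ t ∈ F, t ⊆ Icc 0 1 ×ˢ Icc 0 (1 / 2) ∨ t ⊆ Icc 0 1 ×ˢ Icc (1 / 2) 1) :
    ∃ F₁ F₂ : Set (Set (ℝ × ℝ)), F = F₁ ∪ F₂ ∧
      IsTiling n F₁ (Icc 0 1 ×ˢ Icc 0 (1 / 2)) ∧ IsTiling n F₂ (Icc 0 1 ×ˢ Icc (1 / 2) 1) :=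
  hF.split h
    (by rw [unitSquare, prod_sdiff_prod, sdiff_self, empty_prod, union_empty, closure_prod_eq,
      closure_Icc, closure_unitInterval_sdiff_upper])
    (by rw [unitSquare, prod_sdiff_prod, sdiff_self, empty_prod, union_empty, closure_prod_eq,
      closure_Icc, closure_unitInterval_sdiff_lower])

lemma split_vertical (hF : IsTiling n F unitSquare)
    (h : ∀ t ∈ F, t ⊆ Icc 0 (1 / 2) ×ˢ Icc 0 1 ∨ t ⊆ Icc (1 / 2) 1 ×ˢ Icc 0 1) :
    ∃ F₁ F₂ : Set (Set (ℝ × ℝ)), F = F₁ ∪ F₂ ∧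
      IsTiling n F₁ (Icc 0 (1 / 2) ×ˢ Icc 0 1) ∧ IsTiling n F₂ (Icc (1 / 2) 1 ×ˢ Icc 0 1) :=
  hF.split h
    (by rw [unitSquare, prod_sdiff_prod, sdiff_self, prod_empty, empty_union, closure_prod_eq,
      closure_Icc, closure_unitInterval_sdiff_upper])
    (by rw [unitSquare, prod_sdiff_prod, sdiff_self, prod_empty, empty_union, closure_prod_eq,
      closure_Icc, closure_unitInterval_sdiff_lower])

lemma row_notMem_of_column_mem (hn : 1 ≤ n) (hF : IsTiling n F R) {a b : ℕ}
    (ha : a < 2 ^ n) (hb : b < 2 ^ n) (hcol : dyadicTile n 0 a 0 ∈ F) :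
    dyadicTile 0 n 0 b ∉ F := by
  intro hrow
  have hne : dyadicTile 0 n 0 b ≠ dyadicTile n 0 a 0 := by
    intro h
    have hfst := congrArg (Prod.fst '' ·) h
    simp only [dyadicTile_eq_prod, fst_image_prod _ dyadicInterval.nonempty] at hfst
    exact dyadicInterval.ne_unitInterval hn (hfst.symm.trans dyadicInterval.zero_zero)
  have hinter : dyadicTile 0 n 0 b ∩ dyadicTile n 0 a 0 = dyadicTile n n a b := by
    simp only [dyadicTile_eq_prod, prod_inter_prod, dyadicInterval.zero_zero,
      inter_eq_right.2 (dyadicInterval.subset_unitInterval ha),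
      inter_eq_left.2 (dyadicInterval.subset_unitInterval hb)]
  have hdisj : interior _ ∩ interior _ = ∅ := hF.2.2 hrow hcol hne
  rw [← interior_inter, hinter] at hdisj
  exact (interior_dyadicTile_nonempty n n a b).ne_empty hdisj

end IsTiling

/-- for `n ≥ 1`, every order-`n` tiling of the unit square is either the union
of tilings of the two horizontal halves, or the union of tilings of the two vertical halves. -/
theorem tiling_splits (n : ℕ) (hn : 1 ≤ n) (F : Set (Set (ℝ × ℝ)))
    (hF : IsTiling n F unitSquare) :
    (∃ F₁ F₂ : Set (Set (ℝ × ℝ)), F = F₁ ∪ F₂ ∧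
      IsTiling n F₁ (Set.Icc (0 : ℝ) 1 ×ˢ Set.Icc (0 : ℝ) (1 / 2)) ∧
      IsTiling n F₂ (Set.Icc (0 : ℝ) 1 ×ˢ Set.Icc (1 / 2 : ℝ) 1)) ∨
    (∃ F₁ F₂ : Set (Set (ℝ × ℝ)), F = F₁ ∪ F₂ ∧
      IsTiling n F₁ (Set.Icc (0 : ℝ) (1 / 2) ×ˢ Set.Icc (0 : ℝ) 1) ∧
      IsTiling n F₂ (Set.Icc (1 / 2 : ℝ) 1 ×ˢ Set.Icc (0 : ℝ) 1)) := by
  by_cases hcol : ∃ a < 2 ^ n, dyadicTile n 0 a 0 ∈ F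
  · obtain ⟨a, ha, haF⟩ := hcol
    refine Or.inr <| hF.split_vertical fun t ht ↦ ?_
    obtain ⟨i, j, a', b, hij, ha', hb, rfl⟩ := hF.1 t ht
    refine dyadicTile_subset_left_or_right (Nat.one_le_iff_ne_zero.2 ?_) ha' hb
    rintro rfl
    obtain rfl : a' = 0 := by simpa using ha'
    obtain rfl : j = n := by omega
    exact hF.row_notMem_of_column_mem hn ha hb haF ht
  · refine Or.inl <| hF.split_horizontal fun t ht ↦ ?_
    obtain ⟨i, j, a, b, hij, ha, hb, rfl⟩ := hF.1 t ht
    refine dyadicTile_subset_lower_or_upper (Nat.one_le_iff_ne_zero.2 ?_) ha hb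
    rintro rfl
    obtain rfl : b = 0 := by simpa using hb
    obtain rfl : i = n := by omega
    exact hcol ⟨a, ha, ht⟩

end
end

section
/- p_c ≥ (√5 − 1)/2, where p_c := inf{ p ∈ [0,1] : lim_{n→∞} T_n(p) = 1 }. -/
open Set Filter Topology

noncomputable section

/-- Index type for the dyadic tiles of order `n`: a shape `i` (width `2^{-i}`, height
`2^{-(n-i)}`) together with the horizontal and vertical positions. -/
abbrev TileIndex (n : ℕ) : Type :=
  Σ i : Fin (n + 1), Fin (2 ^ (i : ℕ)) × Fin (2 ^ (n - (i : ℕ)))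

/-- The order-`n` tile corresponding to an index. -/
def tileOf (n : ℕ) (x : TileIndex n) : Set (ℝ × ℝ) :=
  dyadicTile (x.1 : ℕ) (n - (x.1 : ℕ)) (x.2.1 : ℕ) (x.2.2 : ℕ)

/-- The set `S` of available order-`n` tiles admits a tiling of the unit square. -/
def TileableSquare (n : ℕ) (S : Finset (TileIndex n)) : Prop :=
  ∃ F : Set (Set (ℝ × ℝ)), (∀ t ∈ F, ∃ x ∈ S, t = tileOf n x) ∧ IsTiling n F unitSquare

open Classical in
/-- Probability of the event `E` when each of the `(n+1)·2^n` order-`n` dyadic tiles is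
available independently with probability `p`. -/
def Pr (n : ℕ) (p : ℝ) (E : Finset (TileIndex n) → Prop) : ℝ :=
  ∑ S : Finset (TileIndex n),
    if E S then p ^ S.card * (1 - p) ^ ((n + 1) * 2 ^ n - S.card) else 0

/-- `T n p`: the probability that some set of available order-`n` tiles tiles `[0,1]²`. -/
def T (n : ℕ) (p : ℝ) : ℝ := Pr n p (TileableSquare n)

/-- The critical probability `p_c`. -/
def pc : ℝ :=
  sInf {p : ℝ | p ∈ Set.Icc (0 : ℝ) 1 ∧ Tendsto (fun n => T n p) atTop (𝓝 1)}

/-!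
A tiling of order `m + 1` cannot contain both a full-width and a full-height tile, since these
cross. Without full-width tiles every tile lies in the left or the right half of the square, and
the two halves, stretched back to the square, are tilings of order `m` by disjoint sets of tiles;
without full-height tiles the same holds after transposing. The two splitting events are
increasing, each has probability `T m p ^ 2` by independence, and Harris' inequality bounds the
probability of their intersection from below, so `T (m + 1) p ≤ 2 T(m)² - T(m)⁴`. With
`T 0 p = p` and `2p² - p⁴ ≤ p` for `p² + p ≤ 1`, this gives `T n p ≤ p < 1` for all `n` whenever
`p < (√5 - 1)/2`.
-/

section BernoulliProb

open Finset

variable {α β γ : Type*} [Fintype α] [Fintype β] [Fintype γ]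

def bernoulliWeight (α : Type*) [Fintype α] (p : ℝ) (S : Finset α) : ℝ :=
  p ^ #S * (1 - p) ^ (Fintype.card α - #S)

open Classical in
def bernoulliProb (α : Type*) [Fintype α] (p : ℝ) (E : Finset α → Prop) : ℝ :=
  ∑ S : Finset α, if E S then bernoulliWeight α p S else 0

lemma bernoulliWeight_nonneg {p : ℝ} (hp0 : 0 ≤ p) (hp1 : p ≤ 1) (S : Finset α) :
    0 ≤ bernoulliWeight α p S :=
  mul_nonneg (pow_nonneg hp0 _) (pow_nonneg (sub_nonneg.2 hp1) _)

lemma sum_bernoulliWeight (p : ℝ) : ∑ S : Finset α, bernoulliWeight α p S = 1 := by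
  simp [bernoulliWeight, Fintype.sum_pow_mul_eq_add_pow]

lemma bernoulliWeight_mul_bernoulliWeight [DecidableEq α] (p : ℝ) (S T : Finset α) :
    bernoulliWeight α p S * bernoulliWeight α p T
      = bernoulliWeight α p (S ∩ T) * bernoulliWeight α p (S ∪ T) := by
  have hcard := card_union_add_card_inter S T
  have := card_le_univ S
  have := card_le_univ T
  have := card_le_univ (S ∪ T)
  have := card_le_univ (S ∩ T)
  have hp : #S + #T = #(S ∩ T) + #(S ∪ T) := by omega
  have hq : Fintype.card α - #S + (Fintype.card α - #T)
      = Fintype.card α - #(S ∩ T) + (Fintype.card α - #(S ∪ T)) := by omega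
  calc bernoulliWeight α p S * bernoulliWeight α p T
      = p ^ (#S + #T) * (1 - p) ^ (Fintype.card α - #S + (Fintype.card α - #T)) := by
        simp only [bernoulliWeight, pow_add]; ring
    _ = _ := by rw [hp, hq]; simp only [bernoulliWeight, pow_add]; ring

open Classical in
lemma bernoulliProb_eq_sum_mul (p : ℝ) (E : Finset α → Prop) :
    bernoulliProb α p E = ∑ S, bernoulliWeight α p S * if E S then 1 else 0 := by
  simp [bernoulliProb]

lemma bernoulliProb_nonneg {p : ℝ} (hp0 : 0 ≤ p) (hp1 : p ≤ 1) (E : Finset α → Prop) :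
    0 ≤ bernoulliProb α p E := by
  classical
  exact sum_nonneg fun S _ => by
    split_ifs
    exacts [bernoulliWeight_nonneg hp0 hp1 S, le_rfl]

lemma bernoulliProb_mono {p : ℝ} (hp0 : 0 ≤ p) (hp1 : p ≤ 1) {E F : Finset α → Prop}
    (h : ∀ S, E S → F S) : bernoulliProb α p E ≤ bernoulliProb α p F := by
  classical
  refine sum_le_sum fun S _ => ?_
  have := bernoulliWeight_nonneg hp0 hp1 S
  split_ifs <;> simp_all

lemma bernoulliProb_true (p : ℝ) : bernoulliProb α p (fun _ => True) = 1 := by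
  simpa [bernoulliProb] using sum_bernoulliWeight p

lemma bernoulliProb_not (p : ℝ) (E : Finset α → Prop) :
    bernoulliProb α p (fun S => ¬ E S) = 1 - bernoulliProb α p E := by
  classical
  rw [← bernoulliProb_true (α := α) p, bernoulliProb, bernoulliProb, bernoulliProb,
    ← sum_sub_distrib]
  refine sum_congr rfl fun S _ => ?_
  split_ifs <;> simp_all

lemma bernoulliProb_eq (p : ℝ) (S₀ : Finset α) :
    bernoulliProb α p (· = S₀) = bernoulliWeight α p S₀ := by
  classical
  rw [bernoulliProb, sum_eq_single S₀]
  · exact if_pos rfl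
  · exact fun S _ h => if_neg h
  · simp

lemma bernoulliProb_or (p : ℝ) (E F : Finset α → Prop) :
    bernoulliProb α p (fun S => E S ∨ F S)
      = bernoulliProb α p E + bernoulliProb α p F - bernoulliProb α p (fun S => E S ∧ F S) := by
  classical
  rw [eq_sub_iff_add_eq, bernoulliProb, bernoulliProb, bernoulliProb, bernoulliProb,
    ← sum_add_distrib, ← sum_add_distrib]
  refine sum_congr rfl fun S _ => ?_
  by_cases E S <;> by_cases F S <;> simp_all

/-- Harris' inequality, the product-measure case of the FKG inequality. -/
lemma bernoulliProb_mul_le_and {p : ℝ} (hp0 : 0 ≤ p) (hp1 : p ≤ 1) {E F : Finset α → Prop}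
    (hE : ∀ S T, S ⊆ T → E S → E T) (hF : ∀ S T, S ⊆ T → F S → F T) :
    bernoulliProb α p E * bernoulliProb α p F ≤ bernoulliProb α p (fun S => E S ∧ F S) := by
  classical
  have hmono : ∀ G : Finset α → Prop, (∀ S T, S ⊆ T → G S → G T) →
      Monotone fun S => if G S then (1 : ℝ) else 0 := fun G hG S T hST => by
    by_cases hS : G S
    · simp [hS, hG S T hST hS]
    · simp only [hS, if_false]
      split_ifs <;> norm_num
  have h := fkg (fun S => if E S then (1 : ℝ) else 0) (fun S => if F S then (1 : ℝ) else 0)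
    (bernoulliWeight α p) (fun S => bernoulliWeight_nonneg hp0 hp1 S)
    (fun S => by positivity) (fun S => by positivity) (hmono E hE) (hmono F hF)
    (fun S T => (bernoulliWeight_mul_bernoulliWeight p S T).le)
  simp only [sum_bernoulliWeight, one_mul, ← bernoulliProb_eq_sum_mul] at h
  refine h.trans_eq ?_
  rw [bernoulliProb_eq_sum_mul]
  refine sum_congr rfl fun S _ => ?_
  by_cases E S <;> simp_all

lemma bernoulliProb_equiv (e : β ≃ α) (p : ℝ) (E : Finset α → Prop) :
    bernoulliProb α p E = bernoulliProb β p (fun S => E (S.map e.toEmbedding)) := by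
  classical
  rw [bernoulliProb, bernoulliProb, ← e.finsetCongr.sum_comp]
  refine sum_congr rfl fun S _ => ?_
  simp [bernoulliWeight, Fintype.card_congr e]

lemma bernoulliProb_toLeft_and_toRight (p : ℝ) (E : Finset β → Prop) (F : Finset γ → Prop) :
    bernoulliProb (β ⊕ γ) p (fun S => E S.toLeft ∧ F S.toRight)
      = bernoulliProb β p E * bernoulliProb γ p F := by
  classical
  rw [bernoulliProb, ← Finset.sumEquiv.symm.toEquiv.sum_comp, bernoulliProb, bernoulliProb,
    sum_mul_sum, ← Finset.univ_product_univ, sum_product]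
  refine sum_congr rfl fun U _ => sum_congr rfl fun V _ => ?_
  have hU := card_le_univ U
  have hV := card_le_univ V
  have hweight : bernoulliWeight (β ⊕ γ) p (U.disjSum V)
      = bernoulliWeight β p U * bernoulliWeight γ p V := by
    simp only [bernoulliWeight, card_disjSum, Fintype.card_sum, mul_mul_mul_comm, ← pow_add]
    congr 2
    omega
  simp only [OrderIso.coe_toEquiv, Finset.sumEquiv_symm_apply,
    toLeft_disjSum, toRight_disjSum, hweight]
  by_cases E U <;> by_cases F V <;> simp_all

lemma bernoulliProb_preimage_and {f : β → α} {g : γ → α} (hf : f.Injective) (hg : g.Injective)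
    (hfg : ∀ b c, f b ≠ g c) (p : ℝ) (E : Finset β → Prop) (F : Finset γ → Prop) :
    bernoulliProb α p (fun S => E (S.preimage f hf.injOn) ∧ F (S.preimage g hg.injOn))
      = bernoulliProb β p E * bernoulliProb γ p F := by
  classical
  set e : (β ⊕ γ) ⊕ {a // a ∉ Set.range (Sum.elim f g)} ≃ α :=
    ((Equiv.ofInjective _ (hf.sumElim hg hfg)).sumCongr (Equiv.refl _)).trans
      (Equiv.sumCompl (· ∈ Set.range (Sum.elim f g)))
  have hpre : ∀ S : Finset ((β ⊕ γ) ⊕ {a // a ∉ Set.range (Sum.elim f g)}),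
      (S.map e.toEmbedding).preimage f hf.injOn = S.toLeft.toLeft ∧
        (S.map e.toEmbedding).preimage g hg.injOn = S.toLeft.toRight := by
    intro S
    constructor <;> ext y <;>
      simp [e, Equiv.sumCompl, hf.eq_iff, hg.eq_iff, hfg, fun b c => (hfg b c).symm]
  rw [bernoulliProb_equiv e, ← bernoulliProb_toLeft_and_toRight,
    ← mul_one (bernoulliProb (β ⊕ γ) _ _),
    ← bernoulliProb_true (α := {a // a ∉ Set.range (Sum.elim f g)}) p,
    ← bernoulliProb_toLeft_and_toRight]
  simp only [hpre, and_true]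

end BernoulliProb

section Tiles

lemma isDyadicTile_tileOf (n : ℕ) (x : TileIndex n) : IsDyadicTile n (tileOf n x) :=
  ⟨x.1, n - x.1, x.2.1, x.2.2, by omega, x.2.1.2, x.2.2.2, rfl⟩

lemma tileableSquare_iff {n : ℕ} {S : Finset (TileIndex n)} :
    TileableSquare n S ↔ ∃ F : Set (Set (ℝ × ℝ)), (∀ t ∈ F, ∃ x ∈ S, t = tileOf n x) ∧
      ⋃₀ F = unitSquare ∧ F.Pairwise fun s t => interior s ∩ interior t = ∅ := by
  refine exists_congr fun F => ⟨fun ⟨hFS, _, hU, hP⟩ => ⟨hFS, hU, hP⟩,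
    fun ⟨hFS, hU, hP⟩ => ⟨hFS, fun t ht => ?_, hU, hP⟩⟩
  obtain ⟨x, -, rfl⟩ := hFS t ht
  exact isDyadicTile_tileOf n x

lemma TileableSquare.mono {n : ℕ} {S S' : Finset (TileIndex n)} (h : S ⊆ S')
    (hS : TileableSquare n S) : TileableSquare n S' := by
  obtain ⟨F, hFS, hT⟩ := hS
  exact ⟨F, fun t ht => (hFS t ht).imp fun x ⟨hx, he⟩ => ⟨h hx, he⟩, hT⟩

lemma TileableSquare.nonempty {n : ℕ} {S : Finset (TileIndex n)} (hS : TileableSquare n S) :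
    S.Nonempty := by
  obtain ⟨F, hFS, -, hU, -⟩ := hS
  have h0 : ((0 : ℝ), (0 : ℝ)) ∈ ⋃₀ F := hU ▸ ⟨⟨le_rfl, zero_le_one⟩, le_rfl, zero_le_one⟩
  obtain ⟨t, ht, -⟩ := h0
  obtain ⟨x, hx, -⟩ := hFS t ht
  exact ⟨x, hx⟩

lemma card_tileIndex (n : ℕ) : Fintype.card (TileIndex n) = (n + 1) * 2 ^ n := by
  rw [Fintype.card_sigma]
  have h : ∀ i : Fin (n + 1), Fintype.card (Fin (2 ^ (i : ℕ)) × Fin (2 ^ (n - i))) = 2 ^ n := by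
    intro i
    rw [Fintype.card_prod, Fintype.card_fin, Fintype.card_fin, ← pow_add]
    congr 1
    omega
  simp [h]

lemma TileIndex.ext_val {n : ℕ} {x y : TileIndex n} (h₁ : (x.1 : ℕ) = y.1)
    (h₂ : (x.2.1 : ℕ) = y.2.1) (h₃ : (x.2.2 : ℕ) = y.2.2) : x = y := by
  obtain ⟨i, a, b⟩ := x
  obtain ⟨i', a', b'⟩ := y
  obtain rfl : i = i' := Fin.ext h₁
  obtain rfl : a = a' := Fin.ext h₂
  obtain rfl : b = b' := Fin.ext h₃
  rfl

lemma dyadicInterval_subset_Icc {i a : ℕ} (ha : a < 2 ^ i) :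
    Icc ((a : ℝ) / 2 ^ i) ((a + 1) / 2 ^ i) ⊆ Icc 0 1 := by
  have ha' : (a : ℝ) + 1 ≤ 2 ^ i := by exact_mod_cast ha
  exact Icc_subset_Icc (by positivity) ((div_le_one (by positivity)).2 ha')

lemma tileOf_subset_unitSquare {n : ℕ} (x : TileIndex n) : tileOf n x ⊆ unitSquare :=
  prod_mono (dyadicInterval_subset_Icc x.2.1.2) (dyadicInterval_subset_Icc x.2.2.2)

lemma isClosed_tileOf {n : ℕ} (x : TileIndex n) : IsClosed (tileOf n x) :=
  isClosed_Icc.prod isClosed_Icc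

lemma interior_unitSquare : interior unitSquare = Ioo (0 : ℝ) 1 ×ˢ Ioo (0 : ℝ) 1 := by
  rw [unitSquare, interior_prod_eq, interior_Icc]

lemma closure_interior_unitSquare : closure (interior unitSquare) = unitSquare := by
  rw [interior_unitSquare, closure_prod_eq, closure_Ioo zero_ne_one, unitSquare]

lemma Homeomorph.interior_image_inter_eq_empty_iff {X Y : Type*} [TopologicalSpace X]
    [TopologicalSpace Y] (h : X ≃ₜ Y) (s t : Set X) :
    interior (h '' s) ∩ interior (h '' t) = ∅ ↔ interior s ∩ interior t = ∅ := by
  rw [← h.image_interior, ← h.image_interior, ← image_inter h.injective, image_eq_empty]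

end Tiles

section Halves

/-- The tile of order `m + 1` obtained by squeezing an order-`m` tile horizontally into the
left (`c = 0`) or right (`c = 1`) half of the square. -/
def halfIdx {m : ℕ} (c : Fin 2) (y : TileIndex m) : TileIndex (m + 1) :=
  ⟨y.1.succ, ⟨c * 2 ^ (y.1 : ℕ) + y.2.1, by
      have := y.2.1.2
      have : (c : ℕ) ≤ 1 := Nat.le_of_lt_succ c.2
      simp only [Fin.val_succ, pow_succ]
      nlinarith⟩,
    ⟨y.2.2, by simp⟩⟩

lemma halfIdx_eq_halfIdx_iff {m : ℕ} {c c' : Fin 2} {y y' : TileIndex m} :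
    halfIdx c y = halfIdx c' y' ↔ c = c' ∧ y = y' := by
  refine ⟨fun h => ?_, fun ⟨hc, hy⟩ => hc ▸ hy ▸ rfl⟩
  obtain ⟨i, a, b⟩ := y
  obtain ⟨i', a', b'⟩ := y'
  obtain rfl : i = i' := by simpa [halfIdx, Fin.ext_iff] using congrArg (fun x => (x.1 : ℕ)) h
  have h₂ : (c * 2 ^ (i : ℕ) + a : ℕ) = c' * 2 ^ (i : ℕ) + a' := by
    simpa [halfIdx] using congrArg (fun x => (x.2.1 : ℕ)) h
  have h₃ : (b : ℕ) = b' := by simpa [halfIdx] using congrArg (fun x => (x.2.2 : ℕ)) h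
  have ha := a.2
  have ha' := a'.2
  obtain rfl : c = c' := by
    have hdiv := congrArg (· / 2 ^ (i : ℕ)) h₂
    simp only [Nat.mul_comm _ (2 ^ _), Nat.mul_add_div (Nat.two_pow_pos _), Nat.div_eq_of_lt ha,
      Nat.div_eq_of_lt ha', add_zero] at hdiv
    exact Fin.ext hdiv
  exact ⟨rfl, TileIndex.ext_val rfl (by dsimp only; omega) h₃⟩

lemma halfIdx_injective {m : ℕ} (c : Fin 2) : (halfIdx (m := m) c).Injective :=
  fun _ _ h => (halfIdx_eq_halfIdx_iff.1 h).2

lemma exists_halfIdx_eq {m : ℕ} (x : TileIndex (m + 1)) (hx : (x.1 : ℕ) ≠ 0) :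
    ∃ c y, halfIdx (m := m) c y = x := by
  obtain ⟨⟨i, hi⟩, a, b⟩ := x
  obtain ⟨i, rfl⟩ := Nat.exists_eq_add_one_of_ne_zero hx
  have ha : (a : ℕ) < 2 ^ i * 2 := by simpa [pow_succ] using a.2
  refine ⟨⟨a / 2 ^ i, Nat.div_lt_of_lt_mul ha⟩,
    ⟨⟨i, by omega⟩, ⟨a % 2 ^ i, Nat.mod_lt _ (by positivity)⟩, ⟨b, by simpa using b.2⟩⟩,
    TileIndex.ext_val rfl ?_ rfl⟩
  simp [halfIdx, Nat.div_add_mod']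

def halfStrip (c : ℝ) : ℝ × ℝ ≃ₜ ℝ × ℝ :=
  ((Homeomorph.addRight c).trans (Homeomorph.mulLeft₀ (2⁻¹ : ℝ) (by norm_num))).prodCongr
    (Homeomorph.refl ℝ)

lemma halfStrip_apply (c : ℝ) (q : ℝ × ℝ) : halfStrip c q = (2⁻¹ * (q.1 + c), q.2) := rfl

lemma image_halfStrip_prod (c : ℝ) (s t : Set ℝ) :
    halfStrip c '' (s ×ˢ t) = ((fun x => 2⁻¹ * x + 2⁻¹ * c) '' s) ×ˢ t := by
  rw [show ⇑(halfStrip c) = Prod.map (fun x => 2⁻¹ * x + 2⁻¹ * c) id by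
    ext q <;> simp [halfStrip_apply, mul_add]]
  rw [prodMap_image_prod, image_id]

lemma tileOf_halfIdx {m : ℕ} (c : Fin 2) (y : TileIndex m) :
    tileOf (m + 1) (halfIdx c y) = halfStrip c '' tileOf m y := by
  obtain ⟨i, a, b⟩ := y
  have hexp : m + 1 - (i + 1 : ℕ) = m - i := by omega
  simp only [tileOf, dyadicTile, halfIdx, image_halfStrip_prod, Fin.val_succ, hexp,
    image_affine_Icc' (by norm_num : (0 : ℝ) < 2⁻¹)]
  congr 2 <;> push_cast <;> field_simp <;> ring

lemma halfStrip_mem_unitSquare (c : Fin 2) {q : ℝ × ℝ} (hq : q ∈ unitSquare) :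
    halfStrip c q ∈ unitSquare := by
  obtain ⟨⟨h₁, h₂⟩, h₃⟩ := hq
  have : (c : ℝ) ≤ 1 := by fin_cases c <;> norm_num
  have : (0 : ℝ) ≤ c := by positivity
  exact ⟨⟨by rw [halfStrip_apply]; linarith, by rw [halfStrip_apply]; linarith⟩, h₃⟩

/-- The two halves overlap only on the midline `x = 1/2`, which contains no image of an interior
point. -/
lemma eq_of_halfStrip_eq {c c' : Fin 2} {q q' : ℝ × ℝ} (hq : q ∈ interior unitSquare)
    (hq' : q' ∈ unitSquare) (h : halfStrip c' q' = halfStrip c q) : c' = c ∧ q' = q := by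
  rw [interior_unitSquare] at hq
  obtain ⟨⟨h₁, h₂⟩, -⟩ := hq
  obtain ⟨⟨h₁', h₂'⟩, -⟩ := hq'
  have hfst : q'.1 + c' = q.1 + c := by
    have := congrArg Prod.fst h
    simp only [halfStrip_apply] at this
    linarith
  have hc : c' = c := by
    fin_cases c <;> fin_cases c' <;> simp_all <;> linarith
  subst hc
  exact ⟨rfl, (halfStrip c').injective h⟩

end Halves

section Swap

def swapIdx {n : ℕ} (x : TileIndex n) : TileIndex n :=
  ⟨⟨n - x.1, by omega⟩, ⟨x.2.2, x.2.2.2⟩,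
    ⟨x.2.1, by simp [Nat.sub_sub_self (Nat.le_of_lt_succ x.1.2)]⟩⟩

lemma swapIdx_fst {n : ℕ} (x : TileIndex n) : ((swapIdx x).1 : ℕ) = n - x.1 := rfl

lemma swapIdx_fst_ne_zero {n : ℕ} {x : TileIndex n} (hx : (x.1 : ℕ) ≠ n) :
    ((swapIdx x).1 : ℕ) ≠ 0 := by
  have := x.1.2
  rw [swapIdx_fst]
  omega

lemma swapIdx_swapIdx {n : ℕ} (x : TileIndex n) : swapIdx (swapIdx x) = x :=
  TileIndex.ext_val (by simp only [swapIdx_fst]; omega) rfl rfl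

def swapEquiv (n : ℕ) : Equiv.Perm (TileIndex n) :=
  Function.Involutive.toPerm swapIdx swapIdx_swapIdx

lemma tileOf_swapIdx {n : ℕ} (x : TileIndex n) :
    tileOf n (swapIdx x) = Prod.swap '' tileOf n x := by
  have h : n - (n - (x.1 : ℕ)) = x.1 := by omega
  simp only [tileOf, dyadicTile, swapIdx, h, image_swap_prod]

lemma TileableSquare.map_swapEquiv {n : ℕ} {S : Finset (TileIndex n)}
    (hS : TileableSquare n S) : TileableSquare n (S.map (swapEquiv n).toEmbedding) := by
  obtain ⟨F, hFS, hU, hP⟩ := tileableSquare_iff.1 hS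
  refine tileableSquare_iff.2 ⟨(Prod.swap '' ·) '' F, ?_, ?_, ?_⟩
  · rintro _ ⟨t, ht, rfl⟩
    obtain ⟨x, hx, rfl⟩ := hFS t ht
    exact ⟨swapIdx x, Finset.mem_map_of_mem _ hx, (tileOf_swapIdx x).symm⟩
  · rw [← image_sUnion, hU, unitSquare, image_swap_prod]
  · rintro _ ⟨s, hs, rfl⟩ _ ⟨t, ht, rfl⟩ hne
    have := hP hs ht (fun h => hne (h ▸ rfl))
    exact ((Homeomorph.prodComm ℝ ℝ).interior_image_inter_eq_empty_iff s t).2 this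

end Swap

section FullWidth

lemma tileOf_of_fst_eq_zero {n : ℕ} {x : TileIndex n} (hx : (x.1 : ℕ) = 0) :
    tileOf n x = Icc 0 1 ×ˢ Icc ((x.2.2 : ℝ) / 2 ^ n) ((x.2.2 + 1) / 2 ^ n) := by
  obtain ⟨⟨i, hi⟩, a, b⟩ := x
  obtain rfl : i = 0 := hx
  have ha : (a : ℕ) = 0 := by simpa using a.2
  simp [tileOf, dyadicTile, ha]

lemma tileOf_of_fst_eq_self {n : ℕ} {x : TileIndex n} (hx : (x.1 : ℕ) = n) :
    tileOf n x = Icc ((x.2.1 : ℝ) / 2 ^ n) ((x.2.1 + 1) / 2 ^ n) ×ˢ Icc 0 1 := by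
  have h0 : ((swapIdx x).1 : ℕ) = 0 := by rw [swapIdx_fst, hx, Nat.sub_self]
  rw [← swapIdx_swapIdx x, tileOf_swapIdx, tileOf_of_fst_eq_zero h0, image_swap_prod]
  rfl

/-- `x.1 = 0` encodes a full-width tile and `y.1 = n` a full-height one; these always cross. -/
lemma tileOf_ne_and_interior_inter_nonempty {n : ℕ} (hn : n ≠ 0) {x y : TileIndex n}
    (hx : (x.1 : ℕ) = 0) (hy : (y.1 : ℕ) = n) :
    tileOf n x ≠ tileOf n y ∧ (interior (tileOf n x) ∩ interior (tileOf n y)).Nonempty := by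
  rw [tileOf_of_fst_eq_zero hx, tileOf_of_fst_eq_self hy]
  have ha : ((y.2.1 : ℕ) : ℝ) + 1 ≤ 2 ^ n := by
    exact_mod_cast y.2.1.2.trans_eq (by rw [hy])
  have hb : ((x.2.2 : ℕ) : ℝ) + 1 ≤ 2 ^ n := by
    exact_mod_cast x.2.2.2.trans_eq (by rw [hx, Nat.sub_zero])
  set k : ℝ := 2 ^ n
  have hk : 2 ≤ k := le_self_pow₀ (by norm_num) hn
  have ha0 : (0 : ℝ) ≤ y.2.1 := Nat.cast_nonneg _
  have hb0 : (0 : ℝ) ≤ x.2.2 := Nat.cast_nonneg _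
  refine ⟨fun h => ?_, ⟨((y.2.1 + 2⁻¹) / k, (x.2.2 + 2⁻¹) / k), ?_⟩⟩
  · have hb' : (x.2.2 : ℝ) / k ∈ Icc ((x.2.2 : ℝ) / k) ((x.2.2 + 1) / k) :=
      left_mem_Icc.2 (by gcongr; linarith)
    have e₀ : (y.2.1 : ℝ) / k ≤ 0 := (h ▸ mk_mem_prod (left_mem_Icc.2 zero_le_one) hb').1.1
    have e₁ : 1 ≤ ((y.2.1 : ℝ) + 1) / k :=
      (h ▸ mk_mem_prod (right_mem_Icc.2 zero_le_one) hb').1.2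
    rw [div_le_iff₀ (by positivity)] at e₀
    rw [le_div_iff₀ (by positivity)] at e₁
    linarith
  · simp only [interior_prod_eq, interior_Icc, mem_inter_iff, mem_prod, mem_Ioo]
    refine ⟨⟨⟨by positivity, ?_⟩, ?_, ?_⟩, ⟨?_, ?_⟩, by positivity, ?_⟩ <;>
      first
      | (rw [div_lt_one (by positivity)]; linarith)
      | (gcongr; linarith)

end FullWidth

section Split

/-- Without full-width tiles, every tile lies in one of the two halves of the square, so each
half is tiled on its own. -/
lemma TileableSquare.preimage_halfIdx {m : ℕ} {S : Finset (TileIndex (m + 1))}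
    (hS : TileableSquare (m + 1) S) (hS₀ : ∀ x ∈ S, (x.1 : ℕ) ≠ 0) (c : Fin 2) :
    TileableSquare m (S.preimage (halfIdx c) (halfIdx_injective c).injOn) := by
  obtain ⟨F, hFS, hU, hP⟩ := tileableSquare_iff.1 hS
  set Y := {y | halfIdx c y ∈ S ∧ tileOf (m + 1) (halfIdx c y) ∈ F}
  refine tileableSquare_iff.2 ⟨tileOf m '' Y, ?_, ?_, ?_⟩
  · rintro _ ⟨y, hy, rfl⟩
    exact ⟨y, Finset.mem_preimage.2 hy.1, rfl⟩
  · refine (sUnion_subset ?_).antisymm ?_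
    · rintro _ ⟨y, -, rfl⟩
      exact tileOf_subset_unitSquare y
    have hclosed : IsClosed (⋃₀ (tileOf m '' Y)) := by
      rw [sUnion_image]
      exact (toFinite Y).isClosed_biUnion fun y _ => isClosed_tileOf y
    rw [← closure_interior_unitSquare]
    refine closure_minimal (fun q hq => ?_) hclosed
    obtain ⟨t, ht, hqt⟩ : halfStrip c q ∈ ⋃₀ F :=
      hU ▸ halfStrip_mem_unitSquare c (interior_subset hq)
    obtain ⟨x, hxS, rfl⟩ := hFS t ht
    obtain ⟨c', y, rfl⟩ := exists_halfIdx_eq x (hS₀ x hxS)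
    rw [tileOf_halfIdx] at hqt
    obtain ⟨q', hq', hqq'⟩ := hqt
    obtain ⟨rfl, rfl⟩ := eq_of_halfStrip_eq hq (tileOf_subset_unitSquare y hq') hqq'
    exact ⟨tileOf m y, ⟨y, ⟨hxS, ht⟩, rfl⟩, hq'⟩
  · rintro _ ⟨y, hy, rfl⟩ _ ⟨y', hy', rfl⟩ hne
    have hne' : tileOf (m + 1) (halfIdx c y) ≠ tileOf (m + 1) (halfIdx c y') := by
      rw [tileOf_halfIdx, tileOf_halfIdx]
      exact fun h => hne ((halfStrip c).injective.image_injective h)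
    have := hP hy.2 hy'.2 hne'
    rwa [tileOf_halfIdx, tileOf_halfIdx, Homeomorph.interior_image_inter_eq_empty_iff] at this

/-- A tiling cannot contain both a full-width and a full-height tile. -/
lemma TileableSquare.filter_or_filter {m : ℕ} {S : Finset (TileIndex (m + 1))}
    (hS : TileableSquare (m + 1) S) :
    TileableSquare (m + 1) (S.filter fun x => (x.1 : ℕ) ≠ 0) ∨
      TileableSquare (m + 1) (S.filter fun x => (x.1 : ℕ) ≠ m + 1) := by
  obtain ⟨F, hFS, hU, hP⟩ := tileableSquare_iff.1 hS
  by_cases hW : ∃ x₀ ∈ S, (x₀.1 : ℕ) = 0 ∧ tileOf (m + 1) x₀ ∈ F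
  · obtain ⟨x₀, -, hx₀, ht₀⟩ := hW
    refine Or.inr (tileableSquare_iff.2 ⟨F, fun t ht => ?_, hU, hP⟩)
    obtain ⟨x, hxS, rfl⟩ := hFS t ht
    refine ⟨x, Finset.mem_filter.2 ⟨hxS, fun hx => ?_⟩, rfl⟩
    obtain ⟨hne, hmeet⟩ := tileOf_ne_and_interior_inter_nonempty m.succ_ne_zero hx₀ hx
    exact hmeet.ne_empty (hP ht₀ ht hne)
  · refine Or.inl (tileableSquare_iff.2 ⟨F, fun t ht => ?_, hU, hP⟩)
    obtain ⟨x, hxS, rfl⟩ := hFS t ht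
    exact ⟨x, Finset.mem_filter.2 ⟨hxS, fun hx => hW ⟨x, hxS, hx, ht⟩⟩, rfl⟩

def HalvesTileable (m : ℕ) (S : Finset (TileIndex (m + 1))) : Prop :=
  TileableSquare m (S.preimage (halfIdx 0) (halfIdx_injective 0).injOn) ∧
    TileableSquare m (S.preimage (halfIdx 1) (halfIdx_injective 1).injOn)

lemma HalvesTileable.mono {m : ℕ} {S S' : Finset (TileIndex (m + 1))} (h : S ⊆ S')
    (hS : HalvesTileable m S) : HalvesTileable m S' :=
  ⟨hS.1.mono (Finset.monotone_preimage (halfIdx_injective 0) h),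
    hS.2.mono (Finset.monotone_preimage (halfIdx_injective 1) h)⟩

lemma TileableSquare.halvesTileable {m : ℕ} {S : Finset (TileIndex (m + 1))}
    (hS : TileableSquare (m + 1) S) (hS₀ : ∀ x ∈ S, (x.1 : ℕ) ≠ 0) : HalvesTileable m S :=
  ⟨hS.preimage_halfIdx hS₀ 0, hS.preimage_halfIdx hS₀ 1⟩

lemma TileableSquare.halvesTileable_or {m : ℕ} {S : Finset (TileIndex (m + 1))}
    (hS : TileableSquare (m + 1) S) :
    HalvesTileable m S ∨ HalvesTileable m (S.map (swapEquiv (m + 1)).toEmbedding) := by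
  rcases hS.filter_or_filter with h | h
  · exact Or.inl ((h.halvesTileable fun x hx => (Finset.mem_filter.1 hx).2).mono
      (Finset.filter_subset _ _))
  · refine Or.inr ((h.map_swapEquiv.halvesTileable fun x hx => ?_).mono
      (Finset.map_subset_map.2 (Finset.filter_subset _ _)))
    obtain ⟨y, hy, rfl⟩ := Finset.mem_map.1 hx
    exact swapIdx_fst_ne_zero (Finset.mem_filter.1 hy).2

end Split

section Strips

lemma exists_mem_Icc_div {k : ℕ} (hk : 0 < k) {y : ℝ} (hy : y ∈ Icc (0 : ℝ) 1) :
    ∃ b < k, y ∈ Icc ((b : ℝ) / k) ((b + 1) / k) := by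
  have hk' : (0 : ℝ) < k := by exact_mod_cast hk
  rcases hy.2.eq_or_lt with rfl | hy1
  · refine ⟨k - 1, by omega, ?_, ?_⟩ <;>
      rw [Nat.cast_sub hk, Nat.cast_one] <;> field_simp <;> linarith
  · have hyk : 0 ≤ y * k := mul_nonneg hy.1 hk'.le
    refine ⟨⌊y * k⌋₊, (Nat.floor_lt hyk).2 (by nlinarith), ?_, ?_⟩
    · rw [div_le_iff₀ hk']
      exact Nat.floor_le hyk
    · rw [le_div_iff₀ hk']
      exact (Nat.lt_floor_add_one _).le

lemma Ioo_div_inter_Ioo_div_eq_empty {k : ℝ} (hk : 0 < k) {b b' : ℕ} (h : b ≠ b') :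
    Ioo ((b : ℝ) / k) ((b + 1) / k) ∩ Ioo ((b' : ℝ) / k) ((b' + 1) / k) = ∅ := by
  wlog hlt : b < b' generalizing b b'
  · rw [inter_comm]
    exact this h.symm (lt_of_le_of_ne (not_lt.1 hlt) h.symm)
  have hle : ((b : ℝ) + 1) / k ≤ b' / k := by
    gcongr
    exact_mod_cast hlt
  exact eq_empty_of_forall_notMem fun z ⟨h₁, h₂⟩ => by linarith [h₁.2, h₂.1]

lemma tileableSquare_univ (n : ℕ) : TileableSquare n Finset.univ := by
  have hk : (0 : ℝ) < 2 ^ n := by positivity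
  refine tileableSquare_iff.2 ⟨tileOf n '' {x | (x.1 : ℕ) = 0}, ?_, ?_, ?_⟩
  · rintro _ ⟨x, -, rfl⟩
    exact ⟨x, Finset.mem_univ x, rfl⟩
  · refine (sUnion_subset ?_).antisymm fun q hq => ?_
    · rintro _ ⟨x, -, rfl⟩
      exact tileOf_subset_unitSquare x
    obtain ⟨b, hb, hqb⟩ := exists_mem_Icc_div (Nat.two_pow_pos n) hq.2
    let x : TileIndex n := ⟨0, 0, ⟨b, by simpa using hb⟩⟩
    refine ⟨tileOf n x, ⟨x, rfl, rfl⟩, ?_⟩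
    rw [tileOf_of_fst_eq_zero rfl]
    exact ⟨hq.1, by simpa using hqb⟩
  · rintro _ ⟨x, hx, rfl⟩ _ ⟨x', hx', rfl⟩ hne
    have hb : (x.2.2 : ℕ) ≠ x'.2.2 := fun h => hne <| by
      rw [tileOf_of_fst_eq_zero hx, tileOf_of_fst_eq_zero hx', h]
    rw [tileOf_of_fst_eq_zero hx, tileOf_of_fst_eq_zero hx', interior_prod_eq,
      interior_prod_eq, prod_inter_prod]
    simp only [interior_Icc]
    rw [Ioo_div_inter_Ioo_div_eq_empty hk hb, prod_empty]

end Strips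

section Recursion

lemma Pr_eq_bernoulliProb (n : ℕ) (p : ℝ) (E : Finset (TileIndex n) → Prop) :
    Pr n p E = bernoulliProb (TileIndex n) p E := by
  simp only [Pr, bernoulliProb, bernoulliWeight, card_tileIndex]

lemma T_nonneg (n : ℕ) {p : ℝ} (hp0 : 0 ≤ p) (hp1 : p ≤ 1) : 0 ≤ T n p := by
  rw [T, Pr_eq_bernoulliProb]
  exact bernoulliProb_nonneg hp0 hp1 _

lemma T_zero_le {p : ℝ} (hp0 : 0 ≤ p) (hp1 : p ≤ 1) : T 0 p ≤ p := by
  calc T 0 p ≤ bernoulliProb (TileIndex 0) p (fun S => ¬ S = ∅) := by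
        rw [T, Pr_eq_bernoulliProb]
        exact bernoulliProb_mono hp0 hp1 fun S hS => hS.nonempty.ne_empty
    _ = p := by
        rw [bernoulliProb_not, bernoulliProb_eq, bernoulliWeight, card_tileIndex]
        simp

lemma T_one (n : ℕ) : T n 1 = 1 := by
  rw [T, Pr_eq_bernoulliProb]
  refine le_antisymm ?_ ?_
  · exact (bernoulliProb_mono zero_le_one le_rfl fun _ _ => trivial).trans_eq
      (bernoulliProb_true 1)
  · calc (1 : ℝ) = bernoulliProb (TileIndex n) 1 (· = Finset.univ) := by
          simp [bernoulliProb_eq, bernoulliWeight]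
      _ ≤ _ := bernoulliProb_mono zero_le_one le_rfl fun S hS => hS ▸ tileableSquare_univ n

lemma T_succ_le (m : ℕ) {p : ℝ} (hp0 : 0 ≤ p) (hp1 : p ≤ 1) :
    T (m + 1) p ≤ 2 * T m p ^ 2 - T m p ^ 4 := by
  set V := HalvesTileable m
  set H := fun S : Finset (TileIndex (m + 1)) => V (S.map (swapEquiv (m + 1)).toEmbedding)
  have hV : bernoulliProb (TileIndex (m + 1)) p V = T m p ^ 2 := by
    rw [sq, T, Pr_eq_bernoulliProb]
    exact bernoulliProb_preimage_and (halfIdx_injective 0) (halfIdx_injective 1)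
      (fun y y' h => zero_ne_one (halfIdx_eq_halfIdx_iff.1 h).1) p _ _
  have hH : bernoulliProb (TileIndex (m + 1)) p H = T m p ^ 2 :=
    (bernoulliProb_equiv _ p V).symm.trans hV
  have hVmono : ∀ S S', S ⊆ S' → V S → V S' := fun _ _ h hS => hS.mono h
  have hHmono : ∀ S S', S ⊆ S' → H S → H S' := fun _ _ h hS =>
    hS.mono (Finset.map_subset_map.2 h)
  calc T (m + 1) p ≤ bernoulliProb (TileIndex (m + 1)) p (fun S => V S ∨ H S) := by
        rw [T, Pr_eq_bernoulliProb]
        exact bernoulliProb_mono hp0 hp1 fun S hS => hS.halvesTileable_or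
    _ ≤ T m p ^ 2 + T m p ^ 2 - T m p ^ 2 * T m p ^ 2 := by
        rw [bernoulliProb_or, hV, hH]
        have := bernoulliProb_mul_le_and hp0 hp1 hVmono hHmono
        rw [hV, hH] at this
        linarith
    _ = 2 * T m p ^ 2 - T m p ^ 4 := by ring

/-- Below the golden ratio conjugate, `x ↦ 2x² - x⁴` maps `[0, p]` into itself. -/
lemma T_le_of_sq_add_le_one {p : ℝ} (hp0 : 0 ≤ p) (hp : p ^ 2 + p ≤ 1) (n : ℕ) : T n p ≤ p := by
  have hp1 : p ≤ 1 := by nlinarith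
  induction n with
  | zero => exact T_zero_le hp0 hp1
  | succ m ih =>
    have h0 := T_nonneg m hp0 hp1
    have hmono : 2 * T m p ^ 2 - T m p ^ 4 ≤ 2 * p ^ 2 - p ^ 4 := by
      nlinarith [mul_nonneg (mul_nonneg (sub_nonneg.2 ih) (add_nonneg hp0 h0))
        (by nlinarith : (0 : ℝ) ≤ 2 - p ^ 2 - T m p ^ 2)]
    have hfix : 2 * p ^ 2 - p ^ 4 ≤ p := by
      nlinarith [mul_nonneg (mul_nonneg hp0 (sub_nonneg.2 hp1)) (by linarith : 0 ≤ 1 - p - p ^ 2)]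
    linarith [T_succ_le m hp0 hp1]

end Recursion

/-- `p_c ≥ (√5 - 1)/2`. -/
theorem pc_ge_golden : (Real.sqrt 5 - 1) / 2 ≤ pc := by
  have h1 : (1 : ℝ) ∈ {p : ℝ | p ∈ Icc (0 : ℝ) 1 ∧ Tendsto (fun n => T n p) atTop (𝓝 1)} :=
    ⟨⟨zero_le_one, le_rfl⟩, by simp only [T_one, tendsto_const_nhds]⟩
  refine le_csInf ⟨1, h1⟩ ?_
  rintro p ⟨⟨hp0, -⟩, hlim⟩
  by_contra! hlt
  have h5 : Real.sqrt 5 ^ 2 = 5 := Real.sq_sqrt (by norm_num)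
  have hp : p ^ 2 + p ≤ 1 := by nlinarith [Real.sqrt_nonneg 5]
  have : (1 : ℝ) ≤ p := le_of_tendsto' hlim (T_le_of_sq_add_le_one hp0 hp)
  nlinarith

end
end

section
/- Define f_n(q,z) by f_0(q,z) = z and f_{n+1}(q,z) = f_n(q(1+z), 4qz). Then for all q > 0, z > 0, and every natural number n, f_{n+2}(q,z) · f_n(q,z) = f_{n+1}(q,z)^2 + f_n(q,z) · f_{n+1}(q,z)^2; that is, f_{n+2}/f_{n+1} = f_{n+1}/f_n + f_{n+1}. -/
noncomputable section

/-- The two-variable polynomials `f_n`, defined by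
`f_0(q,z) = z` and `f_{n+1}(q,z) = f_n(q(1+z), 4qz)`. -/
def fpoly : ℕ → ℝ → ℝ → ℝ
  | 0, _, z => z
  | n + 1, q, z => fpoly n (q * (1 + z)) (4 * q * z)

theorem fpoly_pos (n : ℕ) {q z : ℝ} (hq : 0 < q) (hz : 0 < z) : 0 < fpoly n q z := by
  induction n generalizing q z with
  | zero => exact hz
  | succ n ih => exact ih (by positivity) (by positivity)

/- Every `f_n` is `f_0` evaluated at an iterate of `(q, z) ↦ (q(1+z), 4qz)`, so the identity
for `n + 1` is the one for `n` at the shifted point, and only `n = 0` needs a computation: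
`f_2 f_0 = 16 q² z² (1 + z) = f_1² (1 + f_0)`. -/
theorem fpoly_add_two_mul_fpoly (n : ℕ) (q z : ℝ) :
    fpoly (n + 2) q z * fpoly n q z = fpoly (n + 1) q z ^ 2 * (1 + fpoly n q z) := by
  induction n generalizing q z with
  | zero => simp only [fpoly]; ring
  | succ n ih => exact ih _ _

/-- for `q, z > 0`, the values `f_n(q,z)` satisfy
`f_{n+2} f_n = f_{n+1}² + f_n f_{n+1}²`, i.e. `f_{n+2}/f_{n+1} = f_{n+1}/f_n + f_{n+1}`. -/
theorem fpoly_recursion (q z : ℝ) (hq : 0 < q) (hz : 0 < z) (n : ℕ) :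
    fpoly (n + 2) q z * fpoly n q z =
        fpoly (n + 1) q z ^ 2 + fpoly n q z * fpoly (n + 1) q z ^ 2 ∧
    fpoly (n + 2) q z / fpoly (n + 1) q z =
        fpoly (n + 1) q z / fpoly n q z + fpoly (n + 1) q z := by
  have hmul : fpoly (n + 2) q z * fpoly n q z =
      fpoly (n + 1) q z ^ 2 + fpoly n q z * fpoly (n + 1) q z ^ 2 := by
    rw [fpoly_add_two_mul_fpoly]; ring
  refine ⟨hmul, ?_⟩
  have hn := (fpoly_pos n hq hz).ne'
  have hn1 := (fpoly_pos (n + 1) hq hz).ne'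
  field_simp
  linear_combination hmul

end
end

section
/- Let (a_n)_{n≥0} be a sequence of reals with a_0 > 0 and a_1 > 0 satisfying a_{n+2}/a_{n+1} = a_{n+1}/a_n + a_{n+1} for every n ≥ 0 (equivalently a_{n+2} a_n = a_{n+1}^2 + a_n a_{n+1}^2, which forces a_n > 0 for all n). Suppose X is a real number such that for some k ≥ 1, a_k/a_{k-1} + a_k/(1−X) ≤ X < 1. Then a_{n+1}/a_n < X for every n, and consequently a_n < a_0 · X^n for every n ≥ 1. -/
/-!
Writing `rₙ = aₙ₊₁ / aₙ`, the recursion says `rₙ₊₁ = rₙ + aₙ₊₁`, so the ratios are strictly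
increasing. With `c = 1 - X ∈ (0, 1]`, the condition `rₙ + aₙ₊₁ / c ≤ X` propagates from `n` to
`n + 1`: it gives `rₙ₊₁ ≤ X`, hence `rₙ₊₁ + aₙ₊₂ / c = rₙ + aₙ₊₁ + rₙ₊₁ aₙ₊₁ / c
≤ rₙ + aₙ₊₁ (c + X) / c = rₙ + aₙ₊₁ / c ≤ X`. So `rₙ < X` from `n = k - 1` on, and for smaller
`n` by monotonicity; the geometric bound follows by induction.
-/

section RatioRecursion

variable {a : ℕ → ℝ}

lemma pos_of_mul_eq_sq_add_mul_sq (h0 : 0 < a 0) (h1 : 0 < a 1)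
    (hrec : ∀ n, a (n + 2) * a n = a (n + 1) ^ 2 + a n * a (n + 1) ^ 2) (n : ℕ) : 0 < a n := by
  induction n using Nat.twoStepInduction with
  | zero => exact h0
  | one => exact h1
  | more n hn hn1 =>
    have hprod : 0 < a (n + 2) * a n := hrec n ▸ by positivity
    exact pos_of_mul_pos_left hprod hn.le

lemma ratio_succ_eq_ratio_add (hpos : ∀ n, 0 < a n)
    (hrec : ∀ n, a (n + 2) * a n = a (n + 1) ^ 2 + a n * a (n + 1) ^ 2) (n : ℕ) :
    a (n + 2) / a (n + 1) = a (n + 1) / a n + a (n + 1) := by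
  rw [div_add' _ _ _ (hpos n).ne', div_eq_div_iff (hpos (n + 1)).ne' (hpos n).ne']
  linear_combination hrec n

lemma strictMono_ratio (hpos : ∀ n, 0 < a n)
    (hrec : ∀ n, a (n + 2) * a n = a (n + 1) ^ 2 + a n * a (n + 1) ^ 2) :
    StrictMono fun n => a (n + 1) / a n :=
  strictMono_nat_of_lt_succ fun n => by
    rw [ratio_succ_eq_ratio_add hpos hrec n]
    exact lt_add_of_pos_right _ (hpos (n + 1))

lemma ratio_add_div_le_succ (hpos : ∀ n, 0 < a n)
    (hrec : ∀ n, a (n + 2) * a n = a (n + 1) ^ 2 + a n * a (n + 1) ^ 2)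
    {X : ℝ} (hX0 : 0 ≤ X) (hX1 : X < 1) {n : ℕ}
    (h : a (n + 1) / a n + a (n + 1) / (1 - X) ≤ X) :
    a (n + 2) / a (n + 1) + a (n + 2) / (1 - X) ≤ X := by
  have hc : 0 < 1 - X := by linarith
  have hb : a (n + 1) ≤ a (n + 1) / (1 - X) := le_div_self (hpos _).le hc (by linarith)
  have hsplit : a (n + 2) / (1 - X) = a (n + 2) / a (n + 1) * (a (n + 1) / (1 - X)) := by
    field_simp [(hpos (n + 1)).ne']
  have hnext : a (n + 1) / a n + a (n + 1) ≤ X := by linarith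
  calc a (n + 2) / a (n + 1) + a (n + 2) / (1 - X)
      = (a (n + 1) / a n + a (n + 1)) + (a (n + 1) / a n + a (n + 1)) * (a (n + 1) / (1 - X)) := by
        rw [hsplit, ratio_succ_eq_ratio_add hpos hrec n]
    _ ≤ (a (n + 1) / a n + a (n + 1)) + X * (a (n + 1) / (1 - X)) := by
        gcongr
        exact (div_pos (hpos _) hc).le
    _ = a (n + 1) / a n + a (n + 1) / (1 - X) := by
        field_simp
        ring
    _ ≤ X := h

lemma ratio_lt_of_ratio_add_div_le (hpos : ∀ n, 0 < a n)
    (hrec : ∀ n, a (n + 2) * a n = a (n + 1) ^ 2 + a n * a (n + 1) ^ 2)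
    {X : ℝ} (hX0 : 0 ≤ X) (hX1 : X < 1) {j : ℕ}
    (h : a (j + 1) / a j + a (j + 1) / (1 - X) ≤ X) (n : ℕ) :
    a (n + 1) / a n < X := by
  have hinv : ∀ m, j ≤ m → a (m + 1) / a m + a (m + 1) / (1 - X) ≤ X :=
    fun m hm => Nat.le_induction h (fun _ _ ih => ratio_add_div_le_succ hpos hrec hX0 hX1 ih) m hm
  have htail : 0 < a (max n j + 1) / (1 - X) := div_pos (hpos _) (by linarith)
  calc a (n + 1) / a n ≤ a (max n j + 1) / a (max n j) :=
        (strictMono_ratio hpos hrec).monotone (le_max_left n j)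
    _ < X := by linarith [hinv _ (le_max_right n j)]

end RatioRecursion

lemma lt_mul_pow_of_succ_lt_mul {a : ℕ → ℝ} {X : ℝ} (hX : 0 < X)
    (h : ∀ n, a (n + 1) < X * a n) (n : ℕ) (hn : 1 ≤ n) : a n < a 0 * X ^ n := by
  induction n, hn using Nat.le_induction with
  | base => simpa [mul_comm] using h 0
  | succ n _ ih =>
    calc a (n + 1) < X * a n := h n
      _ < X * (a 0 * X ^ n) := by gcongr
      _ = a 0 * X ^ (n + 1) := by ring

/-- if `a₀, a₁ > 0` and `aₙ₊₂/aₙ₊₁ = aₙ₊₁/aₙ + aₙ₊₁` for all `n` (stated in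
the equivalent product form, which forces `aₙ > 0` for all `n`), and `X` satisfies
`a_k/a_{k-1} + a_k/(1-X) ≤ X < 1` for some `k ≥ 1`, then `aₙ₊₁/aₙ < X` for every `n` and
`aₙ < a₀ Xⁿ` for every `n ≥ 1`. -/
theorem sequence_bound (a : ℕ → ℝ) (h0 : 0 < a 0) (h1 : 0 < a 1)
    (hrec : ∀ n : ℕ, a (n + 2) * a n = a (n + 1) ^ 2 + a n * a (n + 1) ^ 2)
    (X : ℝ) (k : ℕ) (hk : 1 ≤ k)
    (hX : a k / a (k - 1) + a k / (1 - X) ≤ X) (hX1 : X < 1) :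
    (∀ n : ℕ, a (n + 1) / a n < X) ∧ ∀ n : ℕ, 1 ≤ n → a n < a 0 * X ^ n := by
  have hpos := pos_of_mul_eq_sq_add_mul_sq h0 h1 hrec
  obtain ⟨j, rfl⟩ := Nat.exists_eq_add_of_le' hk
  rw [Nat.add_sub_cancel] at hX
  have hX0 : 0 < X :=
    (add_pos (div_pos (hpos _) (hpos _)) (div_pos (hpos _) (by linarith))).trans_le hX
  have hratio := ratio_lt_of_ratio_add_div_le hpos hrec hX0.le hX1 hX
  refine ⟨hratio, lt_mul_pow_of_succ_lt_mul hX0 fun n => ?_⟩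
  simpa [div_lt_iff₀ (hpos n), mul_comm] using hratio n
end

section
/- Let 0 < q < 1 and define a sequence (a_n) by a_0 = q, a_1 = 4q^2, and a_{n+2}/a_{n+1} = a_{n+1}/a_n + a_{n+1} for all n ≥ 0. Define f_n(q,z) by f_0(q,z) = z and f_{n+1}(q,z) = f_n(q(1+z), 4qz). If for some k ≥ 1 we have a_k < a_{k-1} and (1 − a_k/a_{k-1})^2 ≥ 4 a_k, then for every natural number n, f_n(q,q) ≤ ((1 + a_k/a_{k-1}) / 2)^n. -/
/-!
Put `ρₙ = aₙ₊₁ / aₙ`, so that `ρₙ₊₁ = ρₙ + aₙ₊₁` and `fpoly n q q = aₙ`. With `c = (1 + ρ_{k-1}) / 2`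
it suffices to show `ρₙ ≤ c` for all `n`, since then `aₙ ≤ cⁿ a₀ ≤ cⁿ`. The ratios increase, which
settles `n < k`. For `n ≥ k` the quantity `Φₙ = (1 - c) ρₙ + c aₙ` satisfies `Φₙ₊₁ = Φₙ + aₙ (ρₙ - c)`,
and `Φₙ ≤ c (1 - c)` forces `ρₙ ≤ c`; so once `Φ` is below `c (1 - c)` it stays there. The hypothesis
`(1 - ρ_{k-1})² ≥ 4 a_k` says exactly that `Φ_k ≤ c (1 - c)`.
-/

noncomputable section

section RatioRecurrence

variable {a : ℕ → ℝ} (hrec : ∀ n, a (n + 2) * a n = a (n + 1) ^ 2 + a n * a (n + 1) ^ 2)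
include hrec

lemma pos_of_ratio_rec (h0 : 0 < a 0) (h1 : 0 < a 1) (n : ℕ) : 0 < a n := by
  have hpair : ∀ n, 0 < a n ∧ 0 < a (n + 1) := by
    intro n
    induction n with
    | zero => exact ⟨h0, h1⟩
    | succ n ih =>
      refine ⟨ih.2, pos_of_mul_pos_left (a := a (n + 2)) ?_ ih.1.le⟩
      rw [hrec n]
      exact add_pos (pow_pos ih.2 2) (mul_pos ih.1 (pow_pos ih.2 2))
  exact (hpair n).1

variable (hpos : ∀ n, 0 < a n)
include hpos

lemma ratio_succ_eq (n : ℕ) : a (n + 2) / a (n + 1) = a (n + 1) / a n + a (n + 1) := by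
  have := (hpos n).ne'
  have := (hpos (n + 1)).ne'
  field_simp
  linear_combination hrec n

lemma monotone_ratio : Monotone fun n => a (n + 1) / a n :=
  monotone_nat_of_le_succ fun n => by
    rw [ratio_succ_eq hrec hpos n]
    linarith [hpos (n + 1)]

lemma ratio_le_of_potential_le {c : ℝ} (hc0 : 0 ≤ c) (hc1 : c < 1) {k : ℕ}
    (hk : (1 - c) * (a (k + 1) / a k) + c * a k ≤ c * (1 - c)) {n : ℕ} (hn : k ≤ n) :
    a (n + 1) / a n ≤ c := by
  set Φ : ℕ → ℝ := fun n => (1 - c) * (a (n + 1) / a n) + c * a n with hΦ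
  have ratio_le : ∀ n, Φ n ≤ c * (1 - c) → a (n + 1) / a n ≤ c := fun n h => by
    have := mul_nonneg hc0 (hpos n).le
    nlinarith
  have Φ_succ : ∀ n, Φ (n + 1) = Φ n + a n * (a (n + 1) / a n - c) := fun n => by
    simp only [hΦ, ratio_succ_eq hrec hpos n]
    field_simp [(hpos n).ne']
    ring
  have Φ_le : ∀ n, k ≤ n → Φ n ≤ c * (1 - c) := fun n hn => by
    induction n, hn using Nat.le_induction with
    | base => exact hk
    | succ n _ ih =>
      rw [Φ_succ]
      nlinarith [ratio_le n ih, hpos n]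
  exact ratio_le n (Φ_le n hn)

lemma fpoly_eq_of_ratio_rec (n : ℕ) : fpoly n (a 1 / (4 * a 0)) (a 0) = a n := by
  induction n generalizing a with
  | zero => rfl
  | succ n ih =>
    have := (hpos 0).ne'
    have := (hpos 1).ne'
    have e1 : 4 * (a 1 / (4 * a 0)) * a 0 = a 1 := by field_simp
    have e2 : a 1 / (4 * a 0) * (1 + a 0) = a 2 / (4 * a 1) := by
      field_simp
      linear_combination -(hrec 0)
    rw [fpoly, e1, e2]
    exact ih (fun m => hrec (m + 1)) (fun m => hpos (m + 1))

end RatioRecurrence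

theorem fpoly_bound_general (q : ℝ) (hq0 : 0 < q) (hq1 : q < 1)
    (a : ℕ → ℝ) (ha0 : a 0 = q) (ha1 : a 1 = 4 * q ^ 2)
    (hrec : ∀ n : ℕ, a (n + 2) * a n = a (n + 1) ^ 2 + a n * a (n + 1) ^ 2)
    (k : ℕ) (hlt : a k < a (k - 1))
    (hineq : (1 - a k / a (k - 1)) ^ 2 ≥ 4 * a k) :
    ∀ n : ℕ, fpoly n q q ≤ ((1 + a k / a (k - 1)) / 2) ^ n := by
  have hpos := pos_of_ratio_rec hrec (ha0 ▸ hq0) (by rw [ha1]; positivity)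
  have hq : a 1 / (4 * a 0) = q := by
    rw [ha0, ha1]
    field_simp
  have hfpoly : ∀ n, fpoly n q q = a n := fun n => by
    have h := fpoly_eq_of_ratio_rec hrec hpos n
    rwa [hq, ha0] at h
  obtain ⟨j, rfl⟩ : ∃ j, k = j + 1 :=
    Nat.exists_eq_add_one.2 (Nat.pos_of_ne_zero (by rintro rfl; exact hlt.false))
  rw [Nat.add_sub_cancel] at hlt hineq ⊢
  set r := a (j + 1) / a j
  have hr0 : 0 < r := div_pos (hpos _) (hpos _)
  have hr1 : r < 1 := (div_lt_one (hpos j)).2 hlt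
  have hratio : ∀ n, a (n + 1) / a n ≤ (1 + r) / 2 := fun n => by
    rcases le_or_gt n j with hn | hn
    · linarith [monotone_ratio hrec hpos hn]
    · refine ratio_le_of_potential_le hrec hpos (by linarith) (by linarith) ?_ hn
      rw [ratio_succ_eq hrec hpos]
      linarith
  intro n
  calc fpoly n q q = a n := hfpoly n
    _ ≤ ((1 + r) / 2) ^ n * a 0 :=
      le_geom (by linarith) n fun m _ => (div_le_iff₀ (hpos m)).1 (hratio m)
    _ ≤ ((1 + r) / 2) ^ n := mul_le_of_le_one_right (by positivity) (ha0 ▸ hq1.le)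

/-- let `0 < q < 1` and let `(aₙ)` satisfy `a₀ = q`, `a₁ = 4q²` and the
recursion `aₙ₊₂/aₙ₊₁ = aₙ₊₁/aₙ + aₙ₊₁` (in product form). If for some `k ≥ 1` we have
`a_k < a_{k-1}` and `(1 - a_k/a_{k-1})² ≥ 4 a_k`, then
`f_n(q,q) ≤ ((1 + a_k/a_{k-1})/2)ⁿ` for every `n`. -/
theorem fpoly_bound (q : ℝ) (hq0 : 0 < q) (hq1 : q < 1)
    (a : ℕ → ℝ) (ha0 : a 0 = q) (ha1 : a 1 = 4 * q ^ 2)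
    (hrec : ∀ n : ℕ, a (n + 2) * a n = a (n + 1) ^ 2 + a n * a (n + 1) ^ 2)
    (k : ℕ) (hk : 1 ≤ k) (hlt : a k < a (k - 1))
    (hineq : (1 - a k / a (k - 1)) ^ 2 ≥ 4 * a k) :
    ∀ n : ℕ, fpoly n q q ≤ ((1 + a k / a (k - 1)) / 2) ^ n :=
  fpoly_bound_general q hq0 hq1 a ha0 ha1 hrec k hlt hineq

end
end
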